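/- Let ν be a Lévy measure on ℝⁿ, let A be a symmetric positive semidefinite n×n real matrix, and define Re Ψ(ξ) = (1/2)⟨ξ, Aξ⟩ + ∫_{ℝⁿ} (1 − cos⟨ξ,x⟩) ν(dx). Fix I₀ ∈ (0,1). Then ∫_{‖x‖ > 1} ‖x‖^{I₀} ν(dx) < ∞ if and only if ∫_{‖ξ‖ ≤ 1} Re Ψ(ξ) / ‖ξ‖^{n+I₀} dξ < ∞. -/

import Mathlib

/-!
Write `p = n + I₀`. The Gaussian part of `Re Ψ(ξ) / ‖ξ‖ ^ p` is `O(‖ξ‖ ^ (2 - p))`, hence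
integrable on the unit ball, so only the jump part matters. By Tonelli its integral over the unit
ball is `∫ φ dν` with `φ x = ∫_{‖ξ‖ ≤ 1} (1 - cos ⟪ξ, x⟫) / ‖ξ‖ ^ p dξ`.
Over the whole space the same integral equals `c ‖x‖ ^ I₀` with `0 < c < ∞`: substituting
`ξ ↦ r • ξ` makes it homogeneous of degree `I₀`, and reflections make it depend on `‖x‖` only.
The part over `‖ξ‖ > 1` is bounded uniformly in `x`, and `φ x ≤ C ‖x‖ ^ 2`. Since a Lévy measure
integrates `min 1 ‖x‖²` and gives finite mass to `{‖x‖ > 1}`, `∫ φ dν < ∞` is equivalent to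
`∫_{‖x‖ > 1} ‖x‖ ^ I₀ dν < ∞`.
-/

open MeasureTheory Complex Set

noncomputable section

/-- The real part of a Lévy–Khintchine exponent with Gaussian part `A` and Lévy measure `ν`. -/
def LKRePsi (n : ℕ) (A : Matrix (Fin n) (Fin n) ℝ)
    (ν : Measure (EuclideanSpace ℝ (Fin n))) (ξ : EuclideanSpace ℝ (Fin n)) : ℝ :=
  (1 / 2 : ℝ) * dotProduct (fun i => ξ i) (A.mulVec fun i => ξ i)
    + ∫ x, (1 - Real.cos (inner ℝ ξ x : ℝ)) ∂ν

open Metric Module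
open scoped ENNReal

lemma one_sub_cos_le_two_mul_min_one_sq (t : ℝ) : 1 - Real.cos t ≤ 2 * min 1 (t ^ 2) := by
  have h₁ := Real.one_sub_sq_div_two_le_cos (x := t)
  have h₂ := Real.neg_one_le_cos t
  rcases le_total 1 (t ^ 2) with h | h
  · rw [min_eq_left h]; linarith
  · rw [min_eq_right h]; nlinarith [sq_nonneg t]

lemma sFinite_of_integrable_min_one_sq {F : Type*} [NormedAddCommGroup F] [MeasurableSpace F]
    [OpensMeasurableSpace F] {ν : Measure F}
    (hν : Integrable (fun x => min 1 (‖x‖ ^ 2)) ν) : SFinite ν := by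
  have : SigmaFinite (ν.restrict {0}ᶜ) := by
    refine Measure.sigmaFinite_of_countable (S := insert {0}
      (range fun k : ℕ => {x : F | 1 / ((k : ℝ) + 1) < min 1 (‖x‖ ^ 2)}))
      ((countable_range _).insert _) ?_ ?_
    · rintro s (rfl | ⟨k, rfl⟩)
      · simp [Measure.restrict_apply (measurableSet_singleton _)]
      · exact (Measure.restrict_apply_le _ _).trans_lt (hν.measure_gt_lt_top (by positivity))
    · refine eq_univ_of_forall fun x => ?_
      rcases eq_or_ne x 0 with rfl | hx
      · exact mem_sUnion_of_mem (mem_singleton 0) (mem_insert _ _)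
      · obtain ⟨k, hk⟩ := exists_nat_one_div_lt (lt_min one_pos (by positivity) :
          0 < min 1 (‖x‖ ^ 2))
        exact mem_sUnion_of_mem hk (mem_insert_of_mem _ ⟨k, rfl⟩)
  rw [← ν.restrict_add_restrict_compl (measurableSet_singleton 0), Measure.restrict_singleton]
  infer_instance

section InnerProductSpace

variable {E : Type*} [NormedAddCommGroup E] [InnerProductSpace ℝ E]

lemma integrable_one_sub_cos_inner [MeasurableSpace E] [OpensMeasurableSpace E] {ν : Measure E}
    (hν : Integrable (fun x => min 1 (‖x‖ ^ 2)) ν) (ξ : E) :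
    Integrable (fun x => 1 - Real.cos (inner ℝ ξ x)) ν := by
  refine (hν.const_mul (2 * (1 + ‖ξ‖ ^ 2))).mono' (by fun_prop) (ae_of_all _ fun x => ?_)
  rw [Real.norm_of_nonneg (sub_nonneg.2 (Real.cos_le_one _)), mul_assoc]
  refine (one_sub_cos_le_two_mul_min_one_sq _).trans (mul_le_mul_of_nonneg_left ?_ two_pos.le)
  have hinner : inner ℝ ξ x ^ 2 ≤ ‖ξ‖ ^ 2 * ‖x‖ ^ 2 := by
    rw [← mul_pow, ← sq_abs]
    exact pow_le_pow_left₀ (abs_nonneg _) (abs_real_inner_le_norm ξ x) 2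
  rcases le_total 1 (‖x‖ ^ 2) with hx | hx
  · rw [min_eq_left hx]
    nlinarith [min_le_left 1 (inner ℝ ξ x ^ 2), sq_nonneg ‖ξ‖]
  · rw [min_eq_right hx]
    nlinarith [min_le_right 1 (inner ℝ ξ x ^ 2), sq_nonneg ‖ξ‖, sq_nonneg ‖x‖]

def cosKernel (α : ℝ) (ξ x : E) : ℝ :=
  (1 - Real.cos (inner ℝ ξ x)) / ‖ξ‖ ^ (finrank ℝ E + α)

def stableWeight (α : ℝ) (ξ : E) : ℝ :=
  min 1 (‖ξ‖ ^ 2) / ‖ξ‖ ^ (finrank ℝ E + α)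

lemma cosKernel_nonneg (α : ℝ) (ξ x : E) : 0 ≤ cosKernel α ξ x :=
  div_nonneg (sub_nonneg.2 (Real.cos_le_one _)) (by positivity)

lemma cosKernel_le_two_mul_min_div (α : ℝ) (ξ x : E) :
    cosKernel α ξ x ≤ 2 * min 1 (‖ξ‖ ^ 2 * ‖x‖ ^ 2) / ‖ξ‖ ^ (finrank ℝ E + α) := by
  refine div_le_div_of_nonneg_right ((one_sub_cos_le_two_mul_min_one_sq _).trans ?_)
    (by positivity)
  gcongr
  rw [← mul_pow, ← sq_abs]
  exact pow_le_pow_left₀ (abs_nonneg _) (abs_real_inner_le_norm ξ x) 2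

lemma cosKernel_le_sq_mul_stableWeight (α : ℝ) {ξ : E} (hξ : ‖ξ‖ ≤ 1) (x : E) :
    cosKernel α ξ x ≤ ‖x‖ ^ 2 * (2 * stableWeight α ξ) := by
  rw [stableWeight, min_eq_right (pow_le_one₀ (norm_nonneg ξ) hξ), mul_div_assoc', mul_div_assoc',
    mul_left_comm]
  refine (cosKernel_le_two_mul_min_div α ξ x).trans
    (div_le_div_of_nonneg_right ?_ (by positivity))
  rw [mul_comm (‖x‖ ^ 2)]
  exact mul_le_mul_of_nonneg_left (min_le_right _ _) two_pos.le

lemma cosKernel_le_two_mul_stableWeight (α : ℝ) {ξ x : E} (h : ‖x‖ ≤ 1 ∨ 1 ≤ ‖ξ‖) :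
    cosKernel α ξ x ≤ 2 * stableWeight α ξ := by
  rw [stableWeight, mul_div_assoc']
  refine (cosKernel_le_two_mul_min_div α ξ x).trans (div_le_div_of_nonneg_right
    (mul_le_mul_of_nonneg_left ?_ two_pos.le) (by positivity))
  rcases h with hx | hξ
  · exact min_le_min_left _ (mul_le_of_le_one_right (by positivity)
      (pow_le_one₀ (norm_nonneg x) hx))
  · rw [min_eq_left (one_le_pow₀ hξ)]
    exact min_le_left _ _

lemma cosKernel_smul_right (α : ℝ) (ξ x : E) {r : ℝ} (hr : 0 < r) :
    cosKernel α ξ (r • x) = r ^ (finrank ℝ E + α) * cosKernel α (r • ξ) x := by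
  rcases eq_or_ne ξ 0 with rfl | hξ
  · simp [cosKernel]
  simp only [cosKernel, inner_smul_right, inner_smul_left, norm_smul, Real.norm_of_nonneg hr.le,
    Real.mul_rpow hr.le (norm_nonneg ξ), RCLike.conj_to_real]
  have : 0 < ‖ξ‖ ^ (finrank ℝ E + α) := by positivity
  have : 0 < r ^ (finrank ℝ E + α) := by positivity
  field_simp

lemma cosKernel_linearIsometryEquiv (α : ℝ) (T : E ≃ₗᵢ[ℝ] E) (ξ x : E) :
    cosKernel α (T ξ) (T x) = cosKernel α ξ x := by
  simp [cosKernel]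

variable [FiniteDimensional ℝ E] [MeasurableSpace E] [BorelSpace E]

lemma measurable_cosKernel (α : ℝ) : Measurable (Function.uncurry (cosKernel (E := E) α)) := by
  unfold cosKernel Function.uncurry
  fun_prop

variable (E) in
lemma integrable_stableWeight [Nontrivial E] {α : ℝ} (h0 : 0 < α) (h2 : α < 2) :
    Integrable (stableWeight (E := E) α) := by
  change Integrable fun ξ : E => min 1 (‖ξ‖ ^ 2) / ‖ξ‖ ^ (finrank ℝ E + α)
  rw [integrable_fun_norm_addHaar volume (f := fun y => min 1 (y ^ 2) / y ^ (finrank ℝ E + α)),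
    ← Ioc_union_Ioi_eq_Ioi zero_le_one]
  have hd : (((finrank ℝ E - 1 : ℕ)) : ℝ) = finrank ℝ E - 1 := by
    rw [Nat.cast_sub finrank_pos, Nat.cast_one]
  have hpow : ∀ y : ℝ, 0 < y → ∀ s : ℝ,
      y ^ (finrank ℝ E - 1) * (s / y ^ (finrank ℝ E + α)) = s * y ^ (-1 - α) := by
    intro y hy s
    rw [← Real.rpow_natCast, hd, mul_div_assoc', div_eq_iff (by positivity), mul_assoc,
      ← Real.rpow_add hy, mul_comm]
    ring_nf
  refine IntegrableOn.union ?_ ?_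
  · have : IntegrableOn (fun y : ℝ => y ^ (1 - α)) (Ioc 0 1) :=
      (intervalIntegral.intervalIntegrable_rpow' (by linarith)).1
    refine this.congr_fun (fun y hy => ?_) measurableSet_Ioc
    rw [smul_eq_mul, hpow y hy.1, min_eq_right (by nlinarith [hy.1, hy.2]), ← Real.rpow_two,
      ← Real.rpow_add hy.1]
    ring_nf
  · refine (integrableOn_Ioi_rpow_of_lt (by linarith : -1 - α < -1) one_pos).congr_fun
      (fun y hy => ?_) measurableSet_Ioi
    rw [smul_eq_mul, hpow y (one_pos.trans hy), min_eq_left (by nlinarith [mem_Ioi.1 hy]), one_mul]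

lemma integrableOn_closedBall_div_rpow_of_abs_le [Nontrivial E] {α : ℝ} (h0 : 0 < α)
    (h2 : α < 2) {f : E → ℝ} (hf : Measurable f) {C : ℝ} (hC : ∀ ξ, |f ξ| ≤ C * ‖ξ‖ ^ 2) :
    IntegrableOn (fun ξ => f ξ / ‖ξ‖ ^ (finrank ℝ E + α)) (closedBall 0 1) := by
  refine ((integrable_stableWeight E h0 h2).const_mul C).integrableOn.mono'
    (hf.div (measurable_norm.pow_const _)).aestronglyMeasurable
    (ae_restrict_of_forall_mem measurableSet_closedBall fun ξ hξ => ?_)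
  have hpos : 0 ≤ ‖ξ‖ ^ (finrank ℝ E + α) := by positivity
  rw [Real.norm_eq_abs, abs_div, abs_of_nonneg hpos, stableWeight,
    min_eq_right (pow_le_one₀ (norm_nonneg ξ) (mem_closedBall_zero_iff.1 hξ)), mul_div_assoc']
  exact div_le_div_of_nonneg_right (hC ξ) (by positivity)

lemma lintegral_cosKernel_smul (α : ℝ) (x : E) {r : ℝ} (hr : 0 < r) :
    ∫⁻ ξ, ENNReal.ofReal (cosKernel α ξ (r • x))
      = ENNReal.ofReal (r ^ α) * ∫⁻ ξ, ENNReal.ofReal (cosKernel α ξ x) := by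
  have hmeas : Measurable fun ξ => ENNReal.ofReal (cosKernel α ξ x) :=
    ((measurable_cosKernel α).comp (measurable_id.prodMk measurable_const)).ennreal_ofReal
  have hscale : ∫⁻ ξ, ENNReal.ofReal (cosKernel α (r • ξ) x)
      = ENNReal.ofReal |(r ^ finrank ℝ E)⁻¹| * ∫⁻ ξ, ENNReal.ofReal (cosKernel α ξ x) := by
    rw [← lintegral_map hmeas (measurable_const_smul r), Measure.map_addHaar_smul _ hr.ne',
      lintegral_smul_measure, smul_eq_mul]
  calc ∫⁻ ξ, ENNReal.ofReal (cosKernel α ξ (r • x))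
      = ∫⁻ ξ, ENNReal.ofReal (r ^ (finrank ℝ E + α)) * ENNReal.ofReal (cosKernel α (r • ξ) x) :=
        lintegral_congr fun ξ => by
          rw [cosKernel_smul_right α ξ x hr, ENNReal.ofReal_mul (by positivity)]
    _ = ENNReal.ofReal (r ^ (finrank ℝ E + α) * |(r ^ finrank ℝ E)⁻¹|)
          * ∫⁻ ξ, ENNReal.ofReal (cosKernel α ξ x) := by
        rw [lintegral_const_mul' _ _ ENNReal.ofReal_ne_top, hscale, ← mul_assoc,
          ← ENNReal.ofReal_mul (by positivity)]
    _ = _ := by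
        rw [abs_of_pos (by positivity), Real.rpow_add hr, Real.rpow_natCast]
        field_simp

lemma lintegral_cosKernel_linearIsometryEquiv (α : ℝ) (T : E ≃ₗᵢ[ℝ] E) (x : E) :
    ∫⁻ ξ, ENNReal.ofReal (cosKernel α ξ (T x)) = ∫⁻ ξ, ENNReal.ofReal (cosKernel α ξ x) := by
  rw [← T.measurePreserving.lintegral_comp_emb T.toMeasurableEquiv.measurableEmbedding]
  simp_rw [cosKernel_linearIsometryEquiv]

lemma lintegral_cosKernel_eq_of_norm_eq (α : ℝ) {x y : E} (h : ‖x‖ = ‖y‖) :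
    ∫⁻ ξ, ENNReal.ofReal (cosKernel α ξ x) = ∫⁻ ξ, ENNReal.ofReal (cosKernel α ξ y) := by
  rw [← Submodule.reflection_sub h, lintegral_cosKernel_linearIsometryEquiv]

lemma lintegral_cosKernel_eq_rpow_mul {α : ℝ} (hα : 0 < α) {e : E} (he : ‖e‖ = 1) (x : E) :
    ∫⁻ ξ, ENNReal.ofReal (cosKernel α ξ x)
      = ENNReal.ofReal (‖x‖ ^ α) * ∫⁻ ξ, ENNReal.ofReal (cosKernel α ξ e) := by
  rcases eq_or_ne x 0 with rfl | hx
  · simp [cosKernel, Real.zero_rpow hα.ne']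
  rw [← lintegral_cosKernel_smul α e (norm_pos_iff.2 hx)]
  exact lintegral_cosKernel_eq_of_norm_eq α (by simp [norm_smul, he])

lemma lintegral_cosKernel_pos (α : ℝ) {x : E} (hx : x ≠ 0) :
    0 < ∫⁻ ξ, ENNReal.ofReal (cosKernel α ξ x) := by
  have hmeas : Measurable fun ξ => ENNReal.ofReal (cosKernel α ξ x) :=
    ((measurable_cosKernel α).comp (measurable_id.prodMk measurable_const)).ennreal_ofReal
  rw [lintegral_pos_iff_support hmeas]
  let U : Set E := (fun ξ => inner ℝ ξ x) ⁻¹' Ioo 0 (2 * Real.pi)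
  have hU : IsOpen U := isOpen_Ioo.preimage (continuous_id.inner continuous_const)
  have hxU : (‖x‖ ^ 2)⁻¹ • x ∈ U := by
    simp only [U, mem_preimage, mem_Ioo, inner_smul_left, real_inner_self_eq_norm_sq,
      RCLike.conj_to_real]
    rw [inv_mul_cancel₀ (by positivity)]
    exact ⟨one_pos, by linarith [Real.pi_gt_three]⟩
  refine (hU.measure_pos volume ⟨_, hxU⟩).trans_le (measure_mono fun ξ hξU => ?_)
  obtain ⟨hpos, hlt⟩ : 0 < inner ℝ ξ x ∧ inner ℝ ξ x < 2 * Real.pi := hξU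
  have hξ : ξ ≠ 0 := by rintro rfl; simp at hpos
  have hcos : Real.cos (inner ℝ ξ x) ≠ 1 := fun h =>
    hpos.ne' ((Real.cos_eq_one_iff_of_lt_of_lt (by linarith) hlt).1 h)
  simp only [Function.mem_support, ne_eq, ENNReal.ofReal_eq_zero, not_le, cosKernel]
  exact div_pos (by linarith [(Real.cos_le_one _).lt_of_ne hcos]) (by positivity)

lemma lintegral_cosKernel_lt_top [Nontrivial E] {α : ℝ} (h0 : 0 < α) (h2 : α < 2) {x : E}
    (hx : ‖x‖ ≤ 1) : ∫⁻ ξ, ENNReal.ofReal (cosKernel α ξ x) < ∞ :=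
  (lintegral_mono fun _ => ENNReal.ofReal_le_ofReal
    (cosKernel_le_two_mul_stableWeight α (Or.inl hx))).trans_lt
    ((integrable_stableWeight E h0 h2).const_mul 2).lintegral_lt_top

lemma lintegral_closedBall_cosKernel_le (α : ℝ) (x : E) :
    ∫⁻ ξ in closedBall (0 : E) 1, ENNReal.ofReal (cosKernel α ξ x) ≤ ENNReal.ofReal (‖x‖ ^ 2)
      * ∫⁻ ξ : E, ENNReal.ofReal (2 * stableWeight α ξ) :=
  calc ∫⁻ ξ in closedBall (0 : E) 1, ENNReal.ofReal (cosKernel α ξ x)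
      ≤ ∫⁻ ξ in closedBall (0 : E) 1, ENNReal.ofReal (‖x‖ ^ 2)
          * ENNReal.ofReal (2 * stableWeight α ξ) :=
        setLIntegral_mono' measurableSet_closedBall fun ξ hξ => by
          rw [← ENNReal.ofReal_mul (sq_nonneg _)]
          exact ENNReal.ofReal_le_ofReal
            (cosKernel_le_sq_mul_stableWeight α (mem_closedBall_zero_iff.1 hξ) x)
    _ ≤ _ := by
        rw [lintegral_const_mul' _ _ ENNReal.ofReal_ne_top]
        gcongr
        exact Measure.restrict_le_self

lemma lintegral_cosKernel_le_add (α : ℝ) (x : E) :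
    ∫⁻ ξ, ENNReal.ofReal (cosKernel α ξ x)
      ≤ (∫⁻ ξ in closedBall (0 : E) 1, ENNReal.ofReal (cosKernel α ξ x))
        + ∫⁻ ξ : E, ENNReal.ofReal (2 * stableWeight α ξ) := by
  have hB : MeasurableSet (closedBall (0 : E) 1) := measurableSet_closedBall
  rw [← lintegral_add_compl _ hB]
  refine add_le_add le_rfl ((setLIntegral_mono' hB.compl fun ξ hξ => ?_).trans
    (setLIntegral_le_lintegral _ _))
  refine ENNReal.ofReal_le_ofReal (cosKernel_le_two_mul_stableWeight α (Or.inr ?_))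
  simpa using le_of_lt (not_le.1 (mt mem_closedBall_zero_iff.2 hξ))

lemma mul_setLIntegral_rpow_le {α : ℝ} (hα : 0 < α) {e : E} (he : ‖e‖ = 1) (ν : Measure E) :
    (∫⁻ ξ, ENNReal.ofReal (cosKernel α ξ e)) * ∫⁻ x in {x | 1 < ‖x‖}, ENNReal.ofReal (‖x‖ ^ α) ∂ν
      ≤ ∫⁻ x, (∫⁻ ξ in closedBall (0 : E) 1, ENNReal.ofReal (cosKernel α ξ x)) ∂ν
        + (∫⁻ ξ : E, ENNReal.ofReal (2 * stableWeight α ξ))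
          * ν {x | 1 < ‖x‖} := by
  set G := ∫⁻ ξ : E, ENNReal.ofReal (2 * stableWeight α ξ)
  calc (∫⁻ ξ, ENNReal.ofReal (cosKernel α ξ e)) * ∫⁻ x in {x | 1 < ‖x‖}, ENNReal.ofReal (‖x‖ ^ α) ∂ν
      = ∫⁻ x in {x | 1 < ‖x‖}, (∫⁻ ξ, ENNReal.ofReal (cosKernel α ξ x)) ∂ν := by
        rw [← lintegral_const_mul _ (by fun_prop)]
        exact lintegral_congr fun x => by rw [lintegral_cosKernel_eq_rpow_mul hα he x, mul_comm]
    _ ≤ ∫⁻ x in {x | 1 < ‖x‖},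
          (∫⁻ ξ in closedBall (0 : E) 1, ENNReal.ofReal (cosKernel α ξ x)) + G ∂ν :=
        lintegral_mono fun x => lintegral_cosKernel_le_add α x
    _ ≤ _ := by
        rw [lintegral_add_right _ measurable_const, setLIntegral_const]
        gcongr
        exact Measure.restrict_le_self

lemma lintegral_lintegral_closedBall_cosKernel_le {α : ℝ} (hα : 0 < α) {e : E} (he : ‖e‖ = 1)
    (ν : Measure E) :
    ∫⁻ x, (∫⁻ ξ in closedBall (0 : E) 1, ENNReal.ofReal (cosKernel α ξ x)) ∂ν
      ≤ (∫⁻ ξ : E, ENNReal.ofReal (2 * stableWeight α ξ))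
          * ∫⁻ x, ENNReal.ofReal (min 1 (‖x‖ ^ 2)) ∂ν
        + (∫⁻ ξ, ENNReal.ofReal (cosKernel α ξ e))
          * ∫⁻ x in {x | 1 < ‖x‖}, ENNReal.ofReal (‖x‖ ^ α) ∂ν := by
  set G := ∫⁻ ξ : E, ENNReal.ofReal (2 * stableWeight α ξ)
  set c := ∫⁻ ξ, ENNReal.ofReal (cosKernel α ξ e)
  have hS : MeasurableSet {x : E | 1 < ‖x‖} := measurableSet_lt measurable_const measurable_norm
  have hpt : ∀ x, ∫⁻ ξ in closedBall (0 : E) 1, ENNReal.ofReal (cosKernel α ξ x)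
      ≤ G * ENNReal.ofReal (min 1 (‖x‖ ^ 2))
        + {x : E | 1 < ‖x‖}.indicator (fun x => c * ENNReal.ofReal (‖x‖ ^ α)) x := by
    intro x
    by_cases hx : 1 < ‖x‖
    · rw [indicator_of_mem (s := {x : E | 1 < ‖x‖}) hx, mul_comm c,
        ← lintegral_cosKernel_eq_rpow_mul hα he x]
      exact (setLIntegral_le_lintegral _ _).trans le_add_self
    · rw [min_eq_right (pow_le_one₀ (norm_nonneg x) (not_lt.1 hx)), mul_comm]
      exact (lintegral_closedBall_cosKernel_le α x).trans le_self_add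
  refine (lintegral_mono hpt).trans_eq ?_
  rw [lintegral_add_left (by fun_prop), lintegral_const_mul _ (by fun_prop),
    lintegral_indicator hS, lintegral_const_mul _ (by fun_prop)]

theorem lintegral_lintegral_cosKernel_lt_top_iff [Nontrivial E] {α : ℝ} (h0 : 0 < α)
    (h2 : α < 2) {ν : Measure E} (hν : Integrable (fun x => min 1 (‖x‖ ^ 2)) ν) :
    ∫⁻ x, (∫⁻ ξ in closedBall (0 : E) 1, ENNReal.ofReal (cosKernel α ξ x)) ∂ν < ∞ ↔
      ∫⁻ x in {x | 1 < ‖x‖}, ENNReal.ofReal (‖x‖ ^ α) ∂ν < ∞ := by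
  obtain ⟨e, he⟩ := exists_norm_eq E zero_le_one
  have hc0 := lintegral_cosKernel_pos α (x := e) (norm_ne_zero_iff.1 (by simp [he]))
  have hctop := lintegral_cosKernel_lt_top h0 h2 he.le
  have hG := ((integrable_stableWeight E h0 h2).const_mul 2).lintegral_lt_top
  constructor
  · intro hφ
    have hνS : ν {x | 1 < ‖x‖} < ∞ := (measure_mono fun x (hx : 1 < ‖x‖) =>
      show 1 ≤ min 1 (‖x‖ ^ 2) from le_min le_rfl (one_le_pow₀ hx.le)).trans_lt
        (hν.measure_ge_lt_top one_pos)
    refine ENNReal.lt_top_of_mul_ne_top_right ?_ hc0.ne'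
    exact ((mul_setLIntegral_rpow_le h0 he ν).trans_lt (by finiteness)).ne
  · intro hS
    have := hν.lintegral_lt_top
    exact (lintegral_lintegral_closedBall_cosKernel_le h0 he ν).trans_lt (by finiteness)

lemma lintegral_closedBall_integral_one_sub_cos_div {ν : Measure E} [SFinite ν]
    (hν : Integrable (fun x => min 1 (‖x‖ ^ 2)) ν) (α : ℝ) :
    ∫⁻ ξ in closedBall (0 : E) 1,
        ENNReal.ofReal ((∫ x, (1 - Real.cos (inner ℝ ξ x)) ∂ν) / ‖ξ‖ ^ (finrank ℝ E + α))
      = ∫⁻ x, (∫⁻ ξ in closedBall (0 : E) 1, ENNReal.ofReal (cosKernel α ξ x)) ∂ν := by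
  have hpt : ∀ ξ : E,
      ENNReal.ofReal ((∫ x, (1 - Real.cos (inner ℝ ξ x)) ∂ν) / ‖ξ‖ ^ (finrank ℝ E + α))
        = ∫⁻ x, ENNReal.ofReal (cosKernel α ξ x) ∂ν := fun ξ => by
    rw [← integral_div, ofReal_integral_eq_lintegral_ofReal
      ((integrable_one_sub_cos_inner hν ξ).div_const _) (ae_of_all _ (cosKernel_nonneg α ξ))]
    rfl
  simp_rw [hpt]
  exact lintegral_lintegral_swap (measurable_cosKernel α).ennreal_ofReal.aemeasurable

theorem integrableOn_closedBall_integral_one_sub_cos_div_iff [Nontrivial E] {α : ℝ} (h0 : 0 < α)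
    (h2 : α < 2) {ν : Measure E} (hν : Integrable (fun x => min 1 (‖x‖ ^ 2)) ν) :
    IntegrableOn (fun ξ => (∫ x, (1 - Real.cos (inner ℝ ξ x)) ∂ν) / ‖ξ‖ ^ (finrank ℝ E + α))
        (closedBall 0 1) ↔
      IntegrableOn (fun x => ‖x‖ ^ α) {x | 1 < ‖x‖} ν := by
  have := sFinite_of_integrable_min_one_sq hν
  have hmeas : Measurable fun ξ : E =>
      (∫ x, (1 - Real.cos (inner ℝ ξ x)) ∂ν) / ‖ξ‖ ^ (finrank ℝ E + α) :=
    (show StronglyMeasurable fun p : E × E => 1 - Real.cos (inner ℝ p.1 p.2) by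
      fun_prop).integral_prod_right'.measurable.div (measurable_norm.pow_const _)
  rw [IntegrableOn, IntegrableOn,
    ← lintegral_ofReal_ne_top_iff_integrable hmeas.aestronglyMeasurable
      (ae_of_all _ fun ξ => div_nonneg (integral_nonneg fun x => sub_nonneg.2 (Real.cos_le_one _))
        (by positivity)),
    ← lintegral_ofReal_ne_top_iff_integrable (measurable_norm.pow_const α).aestronglyMeasurable
      (ae_of_all _ fun x => by positivity),
    lintegral_closedBall_integral_one_sub_cos_div hν, ← lt_top_iff_ne_top, ← lt_top_iff_ne_top]
  exact lintegral_lintegral_cosKernel_lt_top_iff h0 h2 hν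

end InnerProductSpace

lemma abs_dotProduct_mulVec_le {ι : Type*} [Fintype ι] [DecidableEq ι] (A : Matrix ι ι ℝ)
    (ξ : EuclideanSpace ℝ ι) :
    |dotProduct (fun i => ξ i) (A.mulVec fun i => ξ i)|
      ≤ ‖Matrix.toEuclideanCLM (𝕜 := ℝ) A‖ * ‖ξ‖ ^ 2 := by
  have : dotProduct (fun i => ξ i) (A.mulVec fun i => ξ i)
      = inner ℝ (Matrix.toEuclideanCLM (𝕜 := ℝ) A ξ) ξ := by
    simp [EuclideanSpace.inner_eq_star_dotProduct]
  rw [this, sq, ← mul_assoc]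
  exact (abs_real_inner_le_norm _ _).trans
    (mul_le_mul_of_nonneg_right ((Matrix.toEuclideanCLM (𝕜 := ℝ) A).le_opNorm ξ) (norm_nonneg ξ))

lemma integrableOn_closedBall_dotProduct_mulVec_div {ι : Type*} [Fintype ι] [DecidableEq ι]
    [Nonempty ι] (A : Matrix ι ι ℝ) {α : ℝ} (h0 : 0 < α) (h2 : α < 2) :
    IntegrableOn (fun ξ : EuclideanSpace ℝ ι =>
        dotProduct (fun i => ξ i) (A.mulVec fun i => ξ i) / ‖ξ‖ ^ (Fintype.card ι + α))
      (closedBall 0 1) := by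
  rw [← finrank_euclideanSpace (𝕜 := ℝ)]
  exact integrableOn_closedBall_div_rpow_of_abs_le h0 h2 (by fun_prop)
    (abs_dotProduct_mulVec_le A)

theorem stmt5_general (n : ℕ) (ν : Measure (EuclideanSpace ℝ (Fin n)))
    (hν : Integrable (fun x : EuclideanSpace ℝ (Fin n) => min 1 (‖x‖ ^ 2)) ν)
    (A : Matrix (Fin n) (Fin n) ℝ)
    (I₀ : ℝ) (hI₀ : I₀ ∈ Set.Ioo (0 : ℝ) 1) :
    IntegrableOn (fun x : EuclideanSpace ℝ (Fin n) => ‖x‖ ^ I₀)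
        {x : EuclideanSpace ℝ (Fin n) | 1 < ‖x‖} ν ↔
      IntegrableOn (fun ξ : EuclideanSpace ℝ (Fin n) => LKRePsi n A ν ξ / ‖ξ‖ ^ ((n : ℝ) + I₀))
        {ξ : EuclideanSpace ℝ (Fin n) | ‖ξ‖ ≤ 1} := by
  obtain ⟨h0, h1⟩ := hI₀
  rcases n.eq_zero_or_pos with rfl | hn
  · have hS : {x : EuclideanSpace ℝ (Fin 0) | 1 < ‖x‖} = ∅ := by
      ext x; simp [Subsingleton.elim x 0]
    have hf : (fun ξ : EuclideanSpace ℝ (Fin 0) => LKRePsi 0 A ν ξ / ‖ξ‖ ^ I₀) = 0 :=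
      funext fun ξ => by simp [Subsingleton.elim ξ 0, Real.zero_rpow h0.ne']
    rw [hS, Nat.cast_zero, zero_add, hf]
    exact iff_of_true integrableOn_empty integrableOn_zero
  have : Nonempty (Fin n) := ⟨⟨0, hn⟩⟩
  have hball : {ξ : EuclideanSpace ℝ (Fin n) | ‖ξ‖ ≤ 1} = closedBall 0 1 := by ext; simp
  have hgauss := (integrableOn_closedBall_dotProduct_mulVec_div A h0 (by linarith)).const_mul
    (1 / 2 : ℝ)
  simp only [Fintype.card_fin] at hgauss
  simp only [LKRePsi, add_div, mul_div_assoc]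
  rw [hball]
  refine (integrableOn_closedBall_integral_one_sub_cos_div_iff h0 (by linarith) hν).symm.trans ?_
  rw [finrank_euclideanSpace_fin]
  exact (integrable_add_iff_integrable_right hgauss).symm

theorem stmt5 (n : ℕ) (ν : Measure (EuclideanSpace ℝ (Fin n)))
    (hν0 : ν ({0} : Set (EuclideanSpace ℝ (Fin n))) = 0)
    (hν : Integrable (fun x : EuclideanSpace ℝ (Fin n) => min 1 (‖x‖ ^ 2)) ν)
    (A : Matrix (Fin n) (Fin n) ℝ) (hAsymm : A.IsSymm) (hApsd : A.PosSemidef)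
    (I₀ : ℝ) (hI₀ : I₀ ∈ Set.Ioo (0 : ℝ) 1) :
    IntegrableOn (fun x : EuclideanSpace ℝ (Fin n) => ‖x‖ ^ I₀)
        {x : EuclideanSpace ℝ (Fin n) | 1 < ‖x‖} ν ↔
      IntegrableOn (fun ξ : EuclideanSpace ℝ (Fin n) => LKRePsi n A ν ξ / ‖ξ‖ ^ ((n : ℝ) + I₀))
        {ξ : EuclideanSpace ℝ (Fin n) | ‖ξ‖ ≤ 1} :=
  stmt5_general n ν hν A I₀ hI₀
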